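/- arXiv:1507.07500 — 2 statements merged into one kernel-verified Lean document; each statement's English description precedes it below -/
import Mathlib

section
/- Let f : ℝ → ℝ belong to the Newton class and suppose the limits of f at +∞ and −∞ are infinite and of opposite signs. Let c₁ < c₂ be two consecutive roots of f′ (i.e. f′(c₁) = f′(c₂) = 0 and f′(x) ≠ 0 for x ∈ (c₁, c₂)) such that f has exactly one root in (c₁, c₂). Then the one-sided limits of M_f at c₁ from the right and at c₂ from the left are infinite and of opposite signs: either lim_{x→c₁+} M_f(x) = +∞ and lim_{x→c₂−} M_f(x) = −∞, or lim_{x→c₁+} M_f(x) = −∞ and lim_{x→c₂−} M_f(x) = +∞. -/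
/-- `f` belongs to the Newton class: `f` is twice continuously differentiable,
roots of `f` are simple, and roots of `f'` are simple. -/
def NewtonClass (f : ℝ → ℝ) : Prop :=
  ContDiff ℝ 2 f ∧ (∀ x, f x = 0 → deriv f x ≠ 0) ∧
    (∀ x, deriv f x = 0 → deriv (deriv f) x ≠ 0)

/-- The classical Newton approximation function `N_f(x) = x - f(x)/f'(x)`. -/
noncomputable def newtonFun (f : ℝ → ℝ) (x : ℝ) : ℝ :=
  x - f x / deriv f x

/-- The modified Newton approximation function
`M_f(x) = N_f(x) - f(N_f(x))/f'(x)`. -/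
noncomputable def modNewtonFun (f : ℝ → ℝ) (x : ℝ) : ℝ :=
  newtonFun f x - f (newtonFun f x) / deriv f x


/-!
Say `f' > 0` on `(c₁, c₂)` (otherwise replace `f` by `-f`, which changes neither `N_f` nor `M_f`).
Then `f` increases through its root, so `f c₁ < 0 < f c₂`, while `f' → 0⁺` at both ends.
Hence `N_f(x) = x - f(x)/f'(x)` tends to `+∞` at `c₁⁺` and to `-∞` at `c₂⁻`, so `f(N_f(x))` tends to
the limits of `f` at `±∞`, and in `M_f(x) = x - (f(x) + f(N_f(x)))/f'(x)` the quotient blows up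
with the sign of those limits.
-/

open Filter Set Topology

lemma newtonFun_neg (f : ℝ → ℝ) : newtonFun (-f) = newtonFun f := by
  funext x
  simp [newtonFun, neg_div_neg_eq]

lemma modNewtonFun_neg (f : ℝ → ℝ) : modNewtonFun (-f) = modNewtonFun f := by
  funext x
  simp [modNewtonFun, newtonFun_neg, neg_div_neg_eq]

lemma modNewtonFun_eq_sub_div (f : ℝ → ℝ) (x : ℝ) :
    modNewtonFun f x = x - (f x + f (newtonFun f x)) / deriv f x := by
  simp only [modNewtonFun, newtonFun]
  ring

section Limits

variable {f : ℝ → ℝ} {l : Filter ℝ} {c : ℝ}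

lemma tendsto_newtonFun_atTop (hl : l ≤ 𝓝 c) (hf : ContinuousAt f c) (hfc : f c < 0)
    (hd : Tendsto (deriv f) l (𝓝[>] 0)) : Tendsto (newtonFun f) l atTop := by
  have hq : Tendsto (fun x => f x / deriv f x) l atBot :=
    (hf.tendsto.mono_left hl).neg_mul_atTop hfc hd.inv_tendsto_nhdsGT_zero
  exact ((tendsto_id.mono_left hl).add_atTop (tendsto_neg_atTop_iff.2 hq)).congr
    fun x => (sub_eq_add_neg x _).symm

lemma tendsto_newtonFun_atBot (hl : l ≤ 𝓝 c) (hf : ContinuousAt f c) (hfc : 0 < f c)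
    (hd : Tendsto (deriv f) l (𝓝[>] 0)) : Tendsto (newtonFun f) l atBot := by
  have hq : Tendsto (fun x => f x / deriv f x) l atTop :=
    (hf.tendsto.mono_left hl).pos_mul_atTop hfc hd.inv_tendsto_nhdsGT_zero
  exact ((tendsto_id.mono_left hl).add_atBot (tendsto_neg_atBot_iff.2 hq)).congr
    fun x => (sub_eq_add_neg x _).symm

lemma tendsto_modNewtonFun_atBot (hl : l ≤ 𝓝 c) (hf : ContinuousAt f c)
    (hfN : Tendsto (fun x => f (newtonFun f x)) l atTop) (hd : Tendsto (deriv f) l (𝓝[>] 0)) :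
    Tendsto (modNewtonFun f) l atBot := by
  have hq : Tendsto (fun x => (f x + f (newtonFun f x)) / deriv f x) l atTop :=
    ((hf.tendsto.mono_left hl).add_atTop hfN).atTop_mul_atTop₀ hd.inv_tendsto_nhdsGT_zero
  exact ((tendsto_id.mono_left hl).add_atBot (tendsto_neg_atBot_iff.2 hq)).congr
    fun x => ((modNewtonFun_eq_sub_div f x).trans (sub_eq_add_neg x _)).symm

lemma tendsto_modNewtonFun_atTop (hl : l ≤ 𝓝 c) (hf : ContinuousAt f c)
    (hfN : Tendsto (fun x => f (newtonFun f x)) l atBot) (hd : Tendsto (deriv f) l (𝓝[>] 0)) :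
    Tendsto (modNewtonFun f) l atTop := by
  have hq : Tendsto (fun x => (f x + f (newtonFun f x)) / deriv f x) l atBot :=
    ((hf.tendsto.mono_left hl).add_atBot hfN).atBot_mul_atTop₀ hd.inv_tendsto_nhdsGT_zero
  exact ((tendsto_id.mono_left hl).add_atTop (tendsto_neg_atTop_iff.2 hq)).congr
    fun x => ((modNewtonFun_eq_sub_div f x).trans (sub_eq_add_neg x _)).symm

end Limits

lemma tendsto_nhdsGT_zero_of_continuousAt {g : ℝ → ℝ} {l : Filter ℝ} {c : ℝ} (hl : l ≤ 𝓝 c)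
    (hg : ContinuousAt g c) (hgc : g c = 0) (hpos : ∀ᶠ x in l, 0 < g x) :
    Tendsto g l (𝓝[>] 0) :=
  tendsto_nhdsWithin_iff.2 ⟨hgc ▸ hg.tendsto.mono_left hl, hpos⟩

theorem tendsto_modNewtonFun_of_deriv_pos {f : ℝ → ℝ} (hf : ContDiff ℝ 1 f)
    (hlim : (Tendsto f atTop atTop ∧ Tendsto f atBot atBot) ∨
            (Tendsto f atTop atBot ∧ Tendsto f atBot atTop))
    {c₁ c₂ r : ℝ} (hc₁ : deriv f c₁ = 0) (hc₂ : deriv f c₂ = 0)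
    (hpos : ∀ x ∈ Ioo c₁ c₂, 0 < deriv f x) (hr : r ∈ Ioo c₁ c₂) (hfr : f r = 0) :
    (Tendsto (modNewtonFun f) (𝓝[>] c₁) atTop ∧ Tendsto (modNewtonFun f) (𝓝[<] c₂) atBot) ∨
    (Tendsto (modNewtonFun f) (𝓝[>] c₁) atBot ∧ Tendsto (modNewtonFun f) (𝓝[<] c₂) atTop) := by
  have hC := hf.continuous
  have hC' := hf.continuous_deriv le_rfl
  have hlt : c₁ < c₂ := hr.1.trans hr.2
  have hmono : StrictMonoOn f (Icc c₁ c₂) :=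
    strictMonoOn_of_deriv_pos (convex_Icc c₁ c₂) hC.continuousOn
      (by simpa only [interior_Icc] using hpos)
  have hfc₁ : f c₁ < 0 :=
    hfr ▸ hmono (left_mem_Icc.2 hlt.le) (Ioo_subset_Icc_self hr) hr.1
  have hfc₂ : 0 < f c₂ :=
    hfr ▸ hmono (Ioo_subset_Icc_self hr) (right_mem_Icc.2 hlt.le) hr.2
  have hd₁ : Tendsto (deriv f) (𝓝[>] c₁) (𝓝[>] 0) :=
    tendsto_nhdsGT_zero_of_continuousAt nhdsWithin_le_nhds hC'.continuousAt hc₁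
      (eventually_of_mem (Ioo_mem_nhdsGT hlt) hpos)
  have hd₂ : Tendsto (deriv f) (𝓝[<] c₂) (𝓝[>] 0) :=
    tendsto_nhdsGT_zero_of_continuousAt nhdsWithin_le_nhds hC'.continuousAt hc₂
      (eventually_of_mem (Ioo_mem_nhdsLT hlt) hpos)
  have hN₁ := tendsto_newtonFun_atTop nhdsWithin_le_nhds hC.continuousAt hfc₁ hd₁
  have hN₂ := tendsto_newtonFun_atBot nhdsWithin_le_nhds hC.continuousAt hfc₂ hd₂
  rcases hlim with ⟨htop, hbot⟩ | ⟨htop, hbot⟩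
  · exact .inr ⟨tendsto_modNewtonFun_atBot nhdsWithin_le_nhds hC.continuousAt (htop.comp hN₁) hd₁,
      tendsto_modNewtonFun_atTop nhdsWithin_le_nhds hC.continuousAt (hbot.comp hN₂) hd₂⟩
  · exact .inl ⟨tendsto_modNewtonFun_atTop nhdsWithin_le_nhds hC.continuousAt (htop.comp hN₁) hd₁,
      tendsto_modNewtonFun_atBot nhdsWithin_le_nhds hC.continuousAt (hbot.comp hN₂) hd₂⟩

theorem modNewtonFun_onesided_limits_infinite_general
    (f : ℝ → ℝ) (hf : NewtonClass f)
    (hlim : (Filter.Tendsto f Filter.atTop Filter.atTop ∧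
              Filter.Tendsto f Filter.atBot Filter.atBot) ∨
            (Filter.Tendsto f Filter.atTop Filter.atBot ∧
              Filter.Tendsto f Filter.atBot Filter.atTop))
    (c₁ c₂ : ℝ)
    (hc₁ : deriv f c₁ = 0) (hc₂ : deriv f c₂ = 0)
    (hconsec : ∀ x ∈ Set.Ioo c₁ c₂, deriv f x ≠ 0)
    (hroot : ∃! r, r ∈ Set.Ioo c₁ c₂ ∧ f r = 0) :
    (Filter.Tendsto (modNewtonFun f) (nhdsWithin c₁ (Set.Ioi c₁)) Filter.atTop ∧
       Filter.Tendsto (modNewtonFun f) (nhdsWithin c₂ (Set.Iio c₂)) Filter.atBot) ∨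
    (Filter.Tendsto (modNewtonFun f) (nhdsWithin c₁ (Set.Ioi c₁)) Filter.atBot ∧
       Filter.Tendsto (modNewtonFun f) (nhdsWithin c₂ (Set.Iio c₂)) Filter.atTop) := by
  have hC1 : ContDiff ℝ 1 f := hf.1.of_le one_le_two
  obtain ⟨r, ⟨hr, hfr⟩, -⟩ := hroot
  rcases hasDerivWithinAt_forall_lt_or_forall_gt_of_forall_ne (convex_Ioo c₁ c₂)
      (fun x _ => ((hC1.differentiable one_ne_zero) x).hasDerivAt.hasDerivWithinAt) hconsec
    with hneg | hpos
  · have hlim' : (Tendsto (-f) atTop atTop ∧ Tendsto (-f) atBot atBot) ∨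
        (Tendsto (-f) atTop atBot ∧ Tendsto (-f) atBot atTop) := by
      rcases hlim with ⟨htop, hbot⟩ | ⟨htop, hbot⟩
      · exact .inr ⟨tendsto_neg_atTop_atBot.comp htop, tendsto_neg_atBot_atTop.comp hbot⟩
      · exact .inl ⟨tendsto_neg_atBot_atTop.comp htop, tendsto_neg_atTop_atBot.comp hbot⟩
    rw [← modNewtonFun_neg f]
    exact tendsto_modNewtonFun_of_deriv_pos hC1.neg hlim'
      (by simp [hc₁]) (by simp [hc₂]) (by simpa using hneg) hr (by simp [hfr])
  · exact tendsto_modNewtonFun_of_deriv_pos hC1 hlim hc₁ hc₂ hpos hr hfr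

/-- If `f` is a Newton-class function with infinite limits of opposite signs at
`±∞`, and `c₁ < c₂` are consecutive roots of `f'` with exactly one root of `f`
in `(c₁, c₂)`, then the one-sided limits of `M_f` at `c₁+` and `c₂−` are
infinite with opposite signs. -/
theorem modNewtonFun_onesided_limits_infinite
    (f : ℝ → ℝ) (hf : NewtonClass f)
    (hlim : (Filter.Tendsto f Filter.atTop Filter.atTop ∧
              Filter.Tendsto f Filter.atBot Filter.atBot) ∨
            (Filter.Tendsto f Filter.atTop Filter.atBot ∧
              Filter.Tendsto f Filter.atBot Filter.atTop))
    (c₁ c₂ : ℝ) (hlt : c₁ < c₂)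
    (hc₁ : deriv f c₁ = 0) (hc₂ : deriv f c₂ = 0)
    (hconsec : ∀ x ∈ Set.Ioo c₁ c₂, deriv f x ≠ 0)
    (hroot : ∃! r, r ∈ Set.Ioo c₁ c₂ ∧ f r = 0) :
    (Filter.Tendsto (modNewtonFun f) (nhdsWithin c₁ (Set.Ioi c₁)) Filter.atTop ∧
       Filter.Tendsto (modNewtonFun f) (nhdsWithin c₂ (Set.Iio c₂)) Filter.atBot) ∨
    (Filter.Tendsto (modNewtonFun f) (nhdsWithin c₁ (Set.Ioi c₁)) Filter.atBot ∧
       Filter.Tendsto (modNewtonFun f) (nhdsWithin c₂ (Set.Iio c₂)) Filter.atTop) :=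
  modNewtonFun_onesided_limits_infinite_general f hf hlim c₁ c₂ hc₁ hc₂ hconsec hroot
end

section
/- Let λ > 0 be a real damping parameter and let f : ℝ → ℝ satisfy: (i) f belongs to the Newton class; (ii) the limits of f at +∞ and −∞ are infinite and of opposite signs; (iii) f has at least four real roots. Then the set of all real numbers a for which the iteration sequence (M_{λ,f}ⁿ(a))_{n∈ℕ} does not converge (to any real limit) is uncountable. -/
/-- The damped Newton approximation function `N_{λ,f}(x) = x - λ·f(x)/f'(x)`. -/
noncomputable def dampedNewtonFun (lam : ℝ) (f : ℝ → ℝ) (x : ℝ) : ℝ :=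
  x - lam * (f x / deriv f x)

/-- The damped modified Newton approximation function
`M_{λ,f}(x) = N_{λ,f}(x) - λ·f(N_{λ,f}(x))/f'(x)`. -/
noncomputable def dampedModNewtonFun (lam : ℝ) (f : ℝ → ℝ) (x : ℝ) : ℝ :=
  dampedNewtonFun lam f x - lam * (f (dampedNewtonFun lam f x) / deriv f x)

/-!
Let `ρ < ρ'` be roots of `f` and `c` the first critical point after `ρ`. Roots are simple, so
`f c ≠ 0` and the Newton step `f / f'` tends to `+∞` as `x → c⁻`: the damped Newton map `N`
carries `(ρ, c)` onto everything left of `ρ` and, mirrored, a left neighbourhood of a root onto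
everything right of it. Whenever `N x` is a root, `M x = N x`.

With roots `r₁ < r₂ < r₃ < r₄` this gives compact intervals `K = [x₁, r₂]`, `A = [r₂, x₀]` and
`B = [r₃, x₃]`, `A` and `B` disjoint, with `M K ⊇ [r₂, r₄] ⊇ A ∪ B` and `M A, M B ⊇ [r₁, r₂] ⊇ K`.
By compactness every itinerary `K, A or B, K, A or B, …` is followed by some orbit. An orbit that
visits both `A` and `B` infinitely often diverges, and there are uncountably many such itineraries.
-/

open Set Filter Topology Function

instance : Uncountable (ℕ → Bool) := by
  rw [← not_countable_iff, ← Cardinal.mk_le_aleph0_iff, ← Cardinal.power_def, Cardinal.mk_nat,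
    Cardinal.mk_bool]
  exact (Cardinal.cantor _).not_ge

section Itinerary

variable {X : Type*} (M : X → X) (J : ℕ → Set X)

def itinerarySet (N : ℕ) : Set X := {a | ∀ k ≤ N, M^[k] a ∈ J k}

theorem itinerarySet_zero : itinerarySet M J 0 = J 0 := by
  ext a
  simp [itinerarySet]

theorem itinerarySet_succ (N : ℕ) :
    itinerarySet M J (N + 1) = itinerarySet M J N ∩ M^[N + 1] ⁻¹' J (N + 1) := by
  ext a
  simp [itinerarySet, Nat.le_succ_iff, or_imp, forall_and]

theorem itinerarySet_antitone : Antitone (itinerarySet M J) :=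
  fun _ _ hNN' _ ha k hk => ha k (hk.trans hNN')

variable {M J}

theorem itinerarySet_nonempty (hcov : ∀ n, J (n + 1) ⊆ M '' J n) {N : ℕ} (hne : (J N).Nonempty) :
    (itinerarySet M J N).Nonempty := by
  induction N generalizing J with
  | zero => simpa [itinerarySet_zero] using hne
  | succ N ih =>
    obtain ⟨b, hb⟩ := ih (J := fun n => J (n + 1)) (fun n => hcov (n + 1)) hne
    obtain ⟨a, ha, rfl⟩ := hcov 0 (hb 0 N.zero_le)
    refine ⟨a, ?_⟩
    rintro (_ | k) hk
    · exact ha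
    · simpa using hb k (by omega)

variable [TopologicalSpace X]

theorem continuousOn_iterate_succ_itinerarySet (hcont : ∀ n, ContinuousOn M (J n)) (N : ℕ) :
    ContinuousOn M^[N + 1] (itinerarySet M J N) := by
  induction N with
  | zero => simpa [itinerarySet_zero] using hcont 0
  | succ N ih =>
    rw [iterate_succ']
    exact (hcont (N + 1)).comp (ih.mono (itinerarySet_antitone M J N.le_succ))
      fun a ha => ha (N + 1) le_rfl

theorem isCompact_itinerarySet [T2Space X] (hcpt : ∀ n, IsCompact (J n))
    (hcont : ∀ n, ContinuousOn M (J n)) (N : ℕ) : IsCompact (itinerarySet M J N) := by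
  induction N with
  | zero => simpa [itinerarySet_zero] using hcpt 0
  | succ N ih =>
    rw [itinerarySet_succ]
    exact ih.of_isClosed_subset ((continuousOn_iterate_succ_itinerarySet hcont N)
      |>.preimage_isClosed_of_isClosed ih.isClosed (hcpt _).isClosed) inter_subset_left

theorem exists_forall_iterate_mem [T2Space X] (hcpt : ∀ n, IsCompact (J n))
    (hne : ∀ n, (J n).Nonempty) (hcont : ∀ n, ContinuousOn M (J n))
    (hcov : ∀ n, J (n + 1) ⊆ M '' J n) : ∃ a, ∀ n, M^[n] a ∈ J n := by
  obtain ⟨a, ha⟩ := IsCompact.nonempty_iInter_of_sequence_nonempty_isCompact_isClosed _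
    (fun N => itinerarySet_antitone M J N.le_succ) (fun N => itinerarySet_nonempty hcov (hne N))
    (isCompact_itinerarySet hcpt hcont 0) fun N => (isCompact_itinerarySet hcpt hcont N).isClosed
  exact ⟨a, fun n => mem_iInter.1 ha n n le_rfl⟩

theorem exists_forall_iterate_two_mul_add_one_mem [T2Space X] {ι : Type*} {K : Set X}
    {I : ι → Set X} (hK : IsCompact K) (hKne : K.Nonempty) (hMK : ContinuousOn M K)
    (hI : ∀ i, IsCompact (I i)) (hMI : ∀ i, ContinuousOn M (I i))
    (hIK : ∀ i, I i ⊆ M '' K) (hKI : ∀ i, K ⊆ M '' I i) (w : ℕ → ι) :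
    ∃ a, ∀ n, M^[2 * n + 1] a ∈ I (w n) := by
  let J : ℕ → Set X := fun n => if Even n then K else I (w (n / 2))
  have hJ_even (k : ℕ) : J (2 * k) = K := if_pos (even_two_mul k)
  have hJ_odd (k : ℕ) : J (2 * k + 1) = I (w k) := by
    simp [J, Nat.mul_add_div]
  obtain ⟨a, ha⟩ := exists_forall_iterate_mem (M := M) (J := J)
    (fun n => by obtain ⟨k, rfl | rfl⟩ := n.even_or_odd' <;> simp [hJ_even, hJ_odd, hK, hI])
    (fun n => by
      obtain ⟨k, rfl | rfl⟩ := n.even_or_odd'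
      exacts [hJ_even k ▸ hKne, hJ_odd k ▸ (hKne.mono (hKI _)).of_image])
    (fun n => by obtain ⟨k, rfl | rfl⟩ := n.even_or_odd' <;> simp [hJ_even, hJ_odd, hMK, hMI])
    (fun n => by
      obtain ⟨k, rfl | rfl⟩ := n.even_or_odd'
      · rw [hJ_odd, hJ_even]
        exact hIK _
      · rw [show 2 * k + 1 + 1 = 2 * (k + 1) by ring, hJ_even, hJ_odd]
        exact hKI _)
  exact ⟨a, fun n => hJ_odd n ▸ ha (2 * n + 1)⟩

theorem not_countable_setOf_not_tendsto_iterate [T2Space X] {K A B : Set X}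
    (hK : IsCompact K) (hA : IsCompact A) (hB : IsCompact B) (hKne : K.Nonempty)
    (hMK : ContinuousOn M K) (hMA : ContinuousOn M A) (hMB : ContinuousOn M B)
    (hAK : A ⊆ M '' K) (hBK : B ⊆ M '' K) (hKA : K ⊆ M '' A) (hKB : K ⊆ M '' B)
    (hAB : Disjoint A B) :
    ¬ {a | ¬ ∃ L, Tendsto (fun n => M^[n] a) atTop (𝓝 L)}.Countable := by
  let I : Bool → Set X := fun b => cond b B A
  have hI_eq {b b' : Bool} {x : X} (hx : x ∈ I b) (hx' : x ∈ I b') : b = b' := by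
    cases b <;> cases b' <;> first
      | rfl
      | exact absurd hx' (hAB.notMem_of_mem_left hx)
      | exact absurd hx (hAB.notMem_of_mem_left hx')
  -- `word t` spells `t` at its even letters, and every pair `2 i, 2 i + 1` contains both symbols
  let word (t : ℕ → Bool) (n : ℕ) : Bool := if Even n then t (n / 2) else !t (n / 2)
  have hword_even (t : ℕ → Bool) (i : ℕ) : word t (2 * i) = t i := by simp [word]
  have hword_odd (t : ℕ → Bool) (i : ℕ) : word t (2 * i + 1) = !t i := by
    simp [word, Nat.mul_add_div]
  choose Φ hΦ using fun t => exists_forall_iterate_two_mul_add_one_mem (I := I) hK hKne hMK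
    (Bool.forall_bool.2 ⟨hA, hB⟩) (Bool.forall_bool.2 ⟨hMA, hMB⟩)
    (Bool.forall_bool.2 ⟨hAK, hBK⟩) (Bool.forall_bool.2 ⟨hKA, hKB⟩) (word t)
  have hdiv (t : ℕ → Bool) : ¬ ∃ L, Tendsto (fun n => M^[n] (Φ t)) atTop (𝓝 L) := by
    rintro ⟨L, hL⟩
    have hLI (b : Bool) : L ∈ I b := by
      have hIb : IsClosed (I b) := by cases b; exacts [hA.isClosed, hB.isClosed]
      refine hIb.mem_of_frequently_of_tendsto (frequently_atTop.2 fun N => ?_) hL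
      by_cases h : t N = b
      · exact ⟨2 * (2 * N) + 1, by omega, by simpa [hword_even, h] using hΦ t (2 * N)⟩
      · refine ⟨2 * (2 * N + 1) + 1, by omega, ?_⟩
        simpa [hword_odd, Bool.not_eq.2 h] using hΦ t (2 * N + 1)
    exact Bool.noConfusion (hI_eq (hLI true) (hLI false))
  have hinj : Injective Φ := fun t t' h => funext fun i => hI_eq
    (by simpa [hword_even] using hΦ t (2 * i)) (by simpa [hword_even, h] using hΦ t' (2 * i))
  exact fun hcount => not_countable_univ ((hcount.preimage hinj).mono fun t _ => hdiv t)

end Itinerary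

theorem mul_pos_of_continuousOn_uIcc_of_ne_zero {g : ℝ → ℝ} {a b : ℝ}
    (hg : ContinuousOn g (uIcc a b)) (h : ∀ x ∈ uIcc a b, g x ≠ 0) : 0 < g a * g b := by
  by_contra! hab
  have h0 : (0 : ℝ) ∈ uIcc (g a) (g b) := by
    rcases mul_nonpos_iff.1 hab with h' | h'
    exacts [mem_uIcc.2 (Or.inr ⟨h'.2, h'.1⟩), mem_uIcc.2 (Or.inl h')]
  obtain ⟨x, hx, hgx⟩ := intermediate_value_uIcc hg h0
  exact h x hx hgx

section DampedNewton

variable {lam : ℝ} {f : ℝ → ℝ}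

theorem dampedNewtonFun_of_root {x : ℝ} (hx : f x = 0) : dampedNewtonFun lam f x = x := by
  simp [dampedNewtonFun, hx]

theorem dampedModNewtonFun_of_root {x : ℝ} (hx : f x = 0) : dampedModNewtonFun lam f x = x := by
  simp [dampedModNewtonFun, dampedNewtonFun_of_root hx, hx]

theorem dampedModNewtonFun_eq_of_dampedNewtonFun_eq {x ρ : ℝ} (hx : dampedNewtonFun lam f x = ρ)
    (hρ : f ρ = 0) : dampedModNewtonFun lam f x = ρ := by
  simp [dampedModNewtonFun, hx, hρ]

theorem dampedNewtonFun_comp_neg (x : ℝ) :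
    dampedNewtonFun lam (fun y => f (-y)) x = -dampedNewtonFun lam f (-x) := by
  simp only [dampedNewtonFun, deriv_comp_neg, div_neg]
  ring

theorem continuousOn_dampedNewtonFun (hf : ContDiff ℝ 1 f) {s : Set ℝ}
    (hs : ∀ x ∈ s, deriv f x ≠ 0) : ContinuousOn (dampedNewtonFun lam f) s :=
  continuousOn_id.sub <| continuousOn_const.mul <|
    hf.continuous.continuousOn.div (hf.continuous_deriv le_rfl).continuousOn hs

theorem continuousOn_dampedModNewtonFun (hf : ContDiff ℝ 1 f) {s : Set ℝ}
    (hs : ∀ x ∈ s, deriv f x ≠ 0) : ContinuousOn (dampedModNewtonFun lam f) s := by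
  have hN : ContinuousOn (dampedNewtonFun lam f) s := continuousOn_dampedNewtonFun hf hs
  exact hN.sub <| continuousOn_const.mul <|
    (hf.continuous.comp_continuousOn hN).div (hf.continuous_deriv le_rfl).continuousOn hs

theorem div_deriv_pos_of_root_lt (hf : ContDiff ℝ 1 f) {ρ x : ℝ} (hρ : f ρ = 0) (hρx : ρ < x)
    (hne : ∀ y ∈ Icc ρ x, deriv f y ≠ 0) : 0 < f x / deriv f x := by
  obtain ⟨ξ, hξ, hξ_slope⟩ := exists_deriv_eq_slope f hρx hf.continuous.continuousOn
    (hf.differentiable one_ne_zero).differentiableOn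
  have hsign : 0 < deriv f ξ * deriv f x :=
    mul_pos_of_continuousOn_uIcc_of_ne_zero (hf.continuous_deriv le_rfl).continuousOn
      fun y hy => hne y (uIcc_subset_Icc ⟨hξ.1.le, hξ.2.le⟩ ⟨hρx.le, le_rfl⟩ hy)
  have hfx : f x = deriv f ξ * (x - ρ) := by
    rw [hξ_slope, hρ, sub_zero, div_mul_cancel₀ _ (sub_ne_zero.2 hρx.ne')]
  refine div_pos_iff.2 (mul_pos_iff.1 ?_)
  calc 0 < deriv f ξ * deriv f x * (x - ρ) := mul_pos hsign (sub_pos.2 hρx)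
    _ = f x * deriv f x := by rw [hfx]; ring

theorem tendsto_div_deriv_nhdsLT_atTop (hf : ContDiff ℝ 1 f) {ρ c : ℝ} (hρ : f ρ = 0)
    (hρc : ρ < c) (hfc : f c ≠ 0) (hdc : deriv f c = 0) (hne : ∀ y ∈ Ico ρ c, deriv f y ≠ 0) :
    Tendsto (fun x => f x / deriv f x) (𝓝[<] c) atTop := by
  have hIoo : ∀ᶠ x in 𝓝[<] c, x ∈ Ioo ρ c := Ioo_mem_nhdsLT hρc
  have hderiv : Tendsto (fun x => |deriv f x|) (𝓝[<] c) (𝓝[>] 0) := by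
    refine tendsto_nhdsWithin_iff.2 ⟨?_, ?_⟩
    · simpa [hdc] using
        ((hf.continuous_deriv le_rfl).abs.tendsto c).mono_left nhdsWithin_le_nhds
    · filter_upwards [hIoo] with x hx using abs_pos.2 (hne x ⟨hx.1.le, hx.2⟩)
  have habs : Tendsto (fun x => |f x| * |deriv f x|⁻¹) (𝓝[<] c) atTop :=
    Tendsto.pos_mul_atTop (abs_pos.2 hfc)
      ((hf.continuous.abs.tendsto c).mono_left nhdsWithin_le_nhds) hderiv.inv_tendsto_nhdsGT_zero
  refine habs.congr' ?_
  filter_upwards [hIoo] with x hx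
  rw [← div_eq_mul_inv, ← abs_div, abs_of_pos (div_deriv_pos_of_root_lt hf hρ hx.1
    fun y hy => hne y ⟨hy.1, hy.2.trans_lt hx.2⟩)]

theorem exists_first_deriv_eq_zero (hf : ContDiff ℝ 1 f) {a b : ℝ} (hab : a < b) (ha : f a = 0)
    (hb : f b = 0) (hda : deriv f a ≠ 0) :
    ∃ c ∈ Ioo a b, deriv f c = 0 ∧ ∀ y ∈ Ico a c, deriv f y ≠ 0 := by
  obtain ⟨w, hw, hw0⟩ := exists_deriv_eq_zero hab hf.continuous.continuousOn (ha.trans hb.symm)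
  set S : Set ℝ := Icc a w ∩ {x | deriv f x = 0}
  have hS : IsClosed S :=
    isClosed_Icc.inter (isClosed_eq (hf.continuous_deriv le_rfl) continuous_const)
  have hbdd : BddBelow S := ⟨a, fun x hx => hx.1.1⟩
  have hcS : sInf S ∈ S := hS.csInf_mem ⟨w, ⟨hw.1.le, le_rfl⟩, hw0⟩ hbdd
  refine ⟨sInf S, ⟨hcS.1.1.lt_of_ne fun h => hda (h ▸ hcS.2), hcS.1.2.trans_lt hw.2⟩, hcS.2, ?_⟩
  intro y hy hy0
  exact (csInf_le hbdd ⟨⟨hy.1, hy.2.le.trans hcS.1.2⟩, hy0⟩).not_gt hy.2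

theorem exists_dampedNewtonFun_eq_of_lt (hlam : 0 < lam) (hf : ContDiff ℝ 1 f)
    (hsimple : ∀ x, f x = 0 → deriv f x ≠ 0) {ρ ρ' τ : ℝ} (hρρ' : ρ < ρ') (hρ : f ρ = 0)
    (hρ' : f ρ' = 0) (hτ : τ < ρ) :
    ∃ x ∈ Ioo ρ ρ', dampedNewtonFun lam f x = τ ∧ ∀ y ∈ Icc ρ x, deriv f y ≠ 0 := by
  obtain ⟨c, ⟨hρc, hcρ'⟩, hdc, hne⟩ := exists_first_deriv_eq_zero hf hρρ' hρ hρ' (hsimple ρ hρ)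
  have hN : Tendsto (dampedNewtonFun lam f) (𝓝[<] c) atBot := by
    have := (tendsto_id.mono_left nhdsWithin_le_nhds).add_atBot (tendsto_neg_atTop_atBot.comp
      ((tendsto_div_deriv_nhdsLT_atTop hf hρ hρc (fun h => hsimple c h hdc) hdc hne).const_mul_atTop
        hlam))
    exact this.congr fun x => (sub_eq_add_neg _ _).symm
  have hIoo : ∀ᶠ x in 𝓝[<] c, x ∈ Ioo ρ c := Ioo_mem_nhdsLT hρc
  obtain ⟨z, hz, hNz⟩ := (hIoo.and (hN.eventually (eventually_lt_atBot τ))).exists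
  have hNρ : dampedNewtonFun lam f ρ = ρ := dampedNewtonFun_of_root hρ
  obtain ⟨x, hx, hNx⟩ := intermediate_value_Icc' hz.1.le
    (continuousOn_dampedNewtonFun hf fun y hy => hne y ⟨hy.1, hy.2.trans_lt hz.2⟩)
    ⟨hNz.le, hNρ.symm ▸ hτ.le⟩
  have hρx : ρ ≠ x := by
    rintro rfl
    exact hτ.ne' (hNρ ▸ hNx)
  exact ⟨x, ⟨hx.1.lt_of_ne hρx, hx.2.trans_lt (hz.2.trans hcρ')⟩, hNx,
    fun y hy => hne y ⟨hy.1, hy.2.trans_lt (hx.2.trans_lt hz.2)⟩⟩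

theorem exists_dampedNewtonFun_eq_of_gt (hlam : 0 < lam) (hf : ContDiff ℝ 1 f)
    (hsimple : ∀ x, f x = 0 → deriv f x ≠ 0) {ρ' ρ τ : ℝ} (hρ'ρ : ρ' < ρ) (hρ' : f ρ' = 0)
    (hρ : f ρ = 0) (hτ : ρ < τ) :
    ∃ x ∈ Ioo ρ' ρ, dampedNewtonFun lam f x = τ ∧ ∀ y ∈ Icc x ρ, deriv f y ≠ 0 := by
  have hderiv (y : ℝ) : deriv (fun y => f (-y)) y = -deriv f (-y) := deriv_comp_neg f y
  obtain ⟨x, hx, hNx, hne⟩ := exists_dampedNewtonFun_eq_of_lt (f := fun y => f (-y)) hlam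
    (hf.comp contDiff_neg) (fun y hy => by simpa [hderiv] using hsimple _ hy) (neg_lt_neg hρ'ρ)
    (by simpa using hρ) (by simpa using hρ') (neg_lt_neg hτ)
  refine ⟨-x, ⟨by linarith [hx.2], by linarith [hx.1]⟩, ?_, fun y hy => ?_⟩
  · rwa [dampedNewtonFun_comp_neg, neg_inj] at hNx
  · simpa [hderiv] using hne (-y) ⟨neg_le_neg hy.2, by linarith [hy.1]⟩

end DampedNewton
theorem dampedModNewtonFun_uncountable_divergence_general
    (lam : ℝ) (hlam : 0 < lam)
    (f : ℝ → ℝ)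
    (hf : NewtonClass f)
    (hroots : ∃ r₁ r₂ r₃ r₄ : ℝ, r₁ < r₂ ∧ r₂ < r₃ ∧ r₃ < r₄ ∧
      f r₁ = 0 ∧ f r₂ = 0 ∧ f r₃ = 0 ∧ f r₄ = 0) :
    ¬ Set.Countable
      {a : ℝ | ¬ ∃ L : ℝ,
        Filter.Tendsto (fun n => (dampedModNewtonFun lam f)^[n] a)
          Filter.atTop (nhds L)} := by
  obtain ⟨r₁, r₂, r₃, r₄, h₁₂, h₂₃, h₃₄, hr₁, hr₂, hr₃, hr₄⟩ := hroots
  obtain ⟨hC2, hsimple, -⟩ := hf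
  have hC1 : ContDiff ℝ 1 f := hC2.of_le (by norm_num)
  obtain ⟨x₀, ⟨hr₂x₀, hx₀r₃⟩, hNx₀, hne₀⟩ :=
    exists_dampedNewtonFun_eq_of_lt hlam hC1 hsimple h₂₃ hr₂ hr₃ h₁₂
  obtain ⟨x₃, ⟨hr₃x₃, hx₃r₄⟩, hNx₃, hne₃⟩ :=
    exists_dampedNewtonFun_eq_of_lt hlam hC1 hsimple h₃₄ hr₃ hr₄ (h₁₂.trans h₂₃)
  obtain ⟨x₁, ⟨hr₁x₁, hx₁r₂⟩, hNx₁, hne₁⟩ :=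
    exists_dampedNewtonFun_eq_of_gt hlam hC1 hsimple h₁₂ hr₁ hr₂ (h₂₃.trans h₃₄)
  have hMK := continuousOn_dampedModNewtonFun (lam := lam) hC1 hne₁
  have hMA := continuousOn_dampedModNewtonFun (lam := lam) hC1 hne₀
  have hMB := continuousOn_dampedModNewtonFun (lam := lam) hC1 hne₃
  have hK := intermediate_value_Icc' hx₁r₂.le hMK
  have hA := intermediate_value_Icc' hr₂x₀.le hMA
  have hB := intermediate_value_Icc' hr₃x₃.le hMB
  simp only [dampedModNewtonFun_of_root hr₂, dampedModNewtonFun_of_root hr₃,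
    dampedModNewtonFun_eq_of_dampedNewtonFun_eq hNx₀ hr₁,
    dampedModNewtonFun_eq_of_dampedNewtonFun_eq hNx₃ hr₁,
    dampedModNewtonFun_eq_of_dampedNewtonFun_eq hNx₁ hr₄] at hK hA hB
  exact not_countable_setOf_not_tendsto_iterate isCompact_Icc isCompact_Icc isCompact_Icc
    (nonempty_Icc.2 hx₁r₂.le) hMK hMA hMB
    ((Icc_subset_Icc_right (hx₀r₃.trans h₃₄).le).trans hK)
    ((Icc_subset_Icc_left h₂₃.le).trans (Icc_subset_Icc_right hx₃r₄.le) |>.trans hK)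
    ((Icc_subset_Icc_left hr₁x₁.le).trans hA)
    ((Icc_subset_Icc hr₁x₁.le h₂₃.le).trans hB)
    (disjoint_left.2 fun y hyA hyB => (hyA.2.trans_lt hx₀r₃).not_ge hyB.1)

/-- For any damping parameter `λ > 0`, if `f` is a Newton-class function with
infinite limits of opposite signs at `±∞` and at least four real roots, then
the set of points whose iteration sequence under `M_{λ,f}` does not converge
is uncountable. -/
theorem dampedModNewtonFun_uncountable_divergence
    (lam : ℝ) (hlam : 0 < lam)
    (f : ℝ → ℝ)
    (hf : NewtonClass f)
    (hlim : (Filter.Tendsto f Filter.atTop Filter.atTop ∧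
              Filter.Tendsto f Filter.atBot Filter.atBot) ∨
            (Filter.Tendsto f Filter.atTop Filter.atBot ∧
              Filter.Tendsto f Filter.atBot Filter.atTop))
    (hroots : ∃ r₁ r₂ r₃ r₄ : ℝ, r₁ < r₂ ∧ r₂ < r₃ ∧ r₃ < r₄ ∧
      f r₁ = 0 ∧ f r₂ = 0 ∧ f r₃ = 0 ∧ f r₄ = 0) :
    ¬ Set.Countable
      {a : ℝ | ¬ ∃ L : ℝ,
        Filter.Tendsto (fun n => (dampedModNewtonFun lam f)^[n] a)
          Filter.atTop (nhds L)} :=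
  dampedModNewtonFun_uncountable_divergence_general lam hlam f hf hroots
end
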